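/- arXiv:1510.01167 — 2 statements merged into one kernel-verified Lean document; each statement's English description precedes it below -/
import Mathlib

section
/- Define polynomials P_q by P_2(z) = 1 and P_q(z) = P_{q-1}(z) + z·∑_{ℓ=2}^{q-2} P_ℓ(z)·P_{q-ℓ}(z) for q ≥ 3. Then for all q ≥ 2, the generating function M_q(z) of Motzkin trees with exactly q unary nodes satisfies M_q(z) = z^{q+1}·P_q(z^2) / (1 - 4z^2)^{q - 1/2} as formal power series (where (1-4z^2)^{-(q-1/2)} is interpreted via the formal binomial series). -/
open PowerSeries Polynomial

inductive MotzkinTree : Type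
  | leaf : MotzkinTree
  | unary : MotzkinTree → MotzkinTree
  | binary : MotzkinTree → MotzkinTree → MotzkinTree

namespace MotzkinTree

def size : MotzkinTree → ℕ
  | leaf => 1
  | unary t => 1 + t.size
  | binary l r => 1 + l.size + r.size

def unaries : MotzkinTree → ℕ
  | leaf => 0
  | unary t => 1 + t.unaries
  | binary l r => l.unaries + r.unaries

end MotzkinTree

noncomputable def motzkinGF (q : ℕ) : PowerSeries ℚ :=
  PowerSeries.mk fun n =>
    (Nat.card {t : MotzkinTree // t.size = n ∧ t.unaries = q} : ℚ)

/-!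
Decomposing a tree at its root gives `M₀ = z (1 + M₀²)` and
`M_{q+1} = z (M_q + ∑_{a+b=q+1} M_a M_b)`. The first equation makes `S = 1 - 2 z M₀` the square
root of `1 - 4z²`, and moving the terms `a = 0`, `b = 0` to the left turns the second one into
`M_{q+1} S = z (M_q + ∑_{ℓ=1}^{q} M_ℓ M_{q+1-ℓ})`. Hence `A_q = M_q S^{2q-1}` satisfies
`A_{q+1} = z (S A_q + ∑_{ℓ=1}^{q} A_ℓ A_{q+1-ℓ})`. As `A₁ = z M₀` and `S + 2 z M₀ = 1`, the
extreme terms `ℓ = 1, q` of the sum cancel the factor `S`, leaving for `q ≥ 3` the recurrence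
`A_q = z (A_{q-1} + ∑_{ℓ=2}^{q-2} A_ℓ A_{q-ℓ})`. It is also satisfied by `z^{q+1} P_q(z²)`, and
both sequences start with `z³` at `q = 2`.
-/

open Finset

theorem Finset.Nat.sum_antidiagonal_succ_eq_sum_Icc {M : Type*} [AddCommMonoid M]
    (f : ℕ × ℕ → M) (q : ℕ) :
    ∑ p ∈ antidiagonal (q + 1), f p =
      f (0, q + 1) + f (q + 1, 0) + ∑ ℓ ∈ Icc 1 q, f (ℓ, q + 1 - ℓ) := by
  rw [Nat.sum_antidiagonal_eq_sum_range_succ_mk,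
    show range (q + 1).succ = insert 0 (insert (q + 1) (Icc 1 q)) by ext; simp; omega,
    sum_insert (by simp), sum_insert (by simp), add_assoc, Nat.sub_zero, Nat.sub_self]

theorem PowerSeries.eq_of_sq_eq_sq_of_constantCoeff_eq {R : Type*} [CommRing R] [IsDomain R]
    [NeZero (2 : R)] {f g : PowerSeries R} (h : f ^ 2 = g ^ 2)
    (hfg : constantCoeff f = constantCoeff g) (hg : constantCoeff g ≠ 0) : f = g := by
  refine (sq_eq_sq_iff_eq_or_eq_neg.1 h).resolve_right fun hneg => hg ?_
  have h2 : 2 * constantCoeff g = 0 := by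
    rw [two_mul]
    nth_rewrite 1 [← hfg]
    rw [hneg, map_neg, neg_add_cancel]
  exact (mul_eq_zero.1 h2).resolve_left two_ne_zero

section Recurrence

variable {R : Type*} [CommRing R]

def MotzkinRecurrence (x : R) (F : ℕ → R) : Prop :=
  ∀ q, 3 ≤ q → F q = x * (F (q - 1) + ∑ ℓ ∈ Icc 2 (q - 2), F ℓ * F (q - ℓ))

theorem MotzkinRecurrence.eq_of_two {x : R} {F G : ℕ → R} (hF : MotzkinRecurrence x F)
    (hG : MotzkinRecurrence x G) (h2 : F 2 = G 2) : ∀ q, 2 ≤ q → F q = G q := by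
  intro q
  induction q using Nat.strong_induction_on with
  | _ q ih =>
    intro hq
    rcases hq.eq_or_lt with rfl | hq
    · exact h2
    rw [hF q hq, hG q hq, ih (q - 1) (by omega) (by omega)]
    congr 2
    refine sum_congr rfl fun ℓ hℓ => ?_
    rw [mem_Icc] at hℓ
    rw [ih ℓ (by omega) (by omega), ih (q - ℓ) (by omega) (by omega)]

theorem motzkinRecurrence_pow_mul_aeval {K : Type*} [CommSemiring K] [Algebra K R]
    (P : ℕ → Polynomial K)
    (hP : ∀ q, 3 ≤ q → P q = P (q - 1) + Polynomial.X * ∑ ℓ ∈ Icc 2 (q - 2), P ℓ * P (q - ℓ))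
    (x : R) : MotzkinRecurrence x fun q => x ^ (q + 1) * Polynomial.aeval (x ^ 2) (P q) := by
  intro q hq
  have hpow : ∀ ℓ ∈ Icc 2 (q - 2), x ^ (q + 1) * x ^ 2 = x * (x ^ (ℓ + 1) * x ^ (q - ℓ + 1)) := by
    intro ℓ hℓ
    rw [mem_Icc] at hℓ
    rw [← pow_add, ← pow_add, ← pow_succ']
    congr 1
    omega
  beta_reduce
  rw [hP q hq, map_add, map_mul, Polynomial.aeval_X, map_sum, show q - 1 + 1 = q by omega,
    mul_add, mul_add, ← mul_assoc, mul_sum, mul_sum]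
  congr 1
  · ring
  · refine sum_congr rfl fun ℓ hℓ => ?_
    rw [map_mul, ← mul_assoc, hpow ℓ hℓ]
    ring

variable {x s : R} {m : ℕ → R}

theorem mul_one_sub_eq (hm : ∀ q, m (q + 1) = x * (m q + ∑ p ∈ antidiagonal (q + 1), m p.1 * m p.2))
    (q : ℕ) :
    m (q + 1) * (1 - 2 * x * m 0) = x * (m q + ∑ ℓ ∈ Icc 1 q, m ℓ * m (q + 1 - ℓ)) := by
  have h := hm q
  rw [Finset.Nat.sum_antidiagonal_succ_eq_sum_Icc (fun p => m p.1 * m p.2)] at h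
  dsimp only at h
  linear_combination h

theorem mul_pow_succ_eq
    (hrec : ∀ q, m (q + 1) * s = x * (m q + ∑ ℓ ∈ Icc 1 q, m ℓ * m (q + 1 - ℓ)))
    {q : ℕ} (hq : 1 ≤ q) :
    m (q + 1) * s ^ (2 * (q + 1) - 1) =
      x * (s * (m q * s ^ (2 * q - 1)) +
        ∑ ℓ ∈ Icc 1 q, m ℓ * s ^ (2 * ℓ - 1) * (m (q + 1 - ℓ) * s ^ (2 * (q + 1 - ℓ) - 1))) := by
  have hpow : ∀ ℓ ∈ Icc 1 q, m ℓ * m (q + 1 - ℓ) * s ^ (2 * q) =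
      m ℓ * s ^ (2 * ℓ - 1) * (m (q + 1 - ℓ) * s ^ (2 * (q + 1 - ℓ) - 1)) := by
    intro ℓ hℓ
    rw [mem_Icc] at hℓ
    rw [mul_mul_mul_comm, ← pow_add]
    congr 2
    omega
  calc m (q + 1) * s ^ (2 * (q + 1) - 1) = m (q + 1) * s * s ^ (2 * q) := by
        rw [mul_assoc, ← pow_succ', show 2 * (q + 1) - 1 = 2 * q + 1 by omega]
    _ = x * (m q * s ^ (2 * q) + ∑ ℓ ∈ Icc 1 q, m ℓ * m (q + 1 - ℓ) * s ^ (2 * q)) := by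
        rw [hrec, ← sum_mul]
        ring
    _ = _ := by
        rw [sum_congr rfl hpow, show s ^ (2 * q) = s * s ^ (2 * q - 1) by
          rw [← pow_succ']; congr 1; omega]
        ring

theorem motzkinRecurrence_mul_pow (hs : s + 2 * x * m 0 = 1)
    (hrec : ∀ q, m (q + 1) * s = x * (m q + ∑ ℓ ∈ Icc 1 q, m ℓ * m (q + 1 - ℓ))) :
    MotzkinRecurrence x fun q => m q * s ^ (2 * q - 1) := by
  have h1 : m 1 * s = x * m 0 := by simpa using hrec 0
  intro q hq
  obtain ⟨r, rfl⟩ : ∃ r, q = r + 1 := ⟨q - 1, by omega⟩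
  have hsplit : Icc 1 r = insert 1 (insert r (Icc 2 (r - 1))) := by
    ext
    simp only [mem_Icc, mem_insert]
    omega
  beta_reduce
  rw [mul_pow_succ_eq hrec (by omega), hsplit, sum_insert (by simp; omega),
    sum_insert (by simp; omega), Nat.add_sub_cancel, show r + 1 - 2 = r - 1 by omega,
    Nat.add_sub_cancel_left]
  linear_combination (x * (m r * s ^ (2 * r - 1))) * hs + 2 * x * (m r * s ^ (2 * r - 1)) * h1

theorem mul_pow_two_eq (h0 : m 0 = x * (1 + m 0 * m 0)) (hs : s + 2 * x * m 0 = 1)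
    (hrec : ∀ q, m (q + 1) * s = x * (m q + ∑ ℓ ∈ Icc 1 q, m ℓ * m (q + 1 - ℓ))) :
    m 2 * s ^ 3 = x ^ 3 := by
  have h1 : m 1 * s = x * m 0 := by simpa using hrec 0
  have h2 := mul_pow_succ_eq hrec le_rfl
  norm_num at h2
  rw [h2, h1]
  linear_combination (x ^ 2 * m 0) * hs + x ^ 2 * h0

end Recurrence

namespace MotzkinTree

theorem size_pos (t : MotzkinTree) : 0 < t.size := by
  cases t <;> simp [size]

theorem finite_setOf_size_le (n : ℕ) : {t : MotzkinTree | t.size ≤ n}.Finite := by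
  induction n with
  | zero =>
    convert Set.finite_empty
    ext t
    cases t <;> simp [size]
  | succ n ih =>
    refine (((ih.image unary).union (ih.image2 binary ih)).insert leaf).subset ?_
    rintro (_ | t | ⟨l, r⟩) h <;> simp only [Set.mem_ofPred_eq, size] at h
    · exact Set.mem_insert _ _
    · exact .inr (.inl (Set.mem_image_of_mem _ (show t.size ≤ n by omega)))
    · exact .inr (.inr (Set.mem_image2_of_mem (show l.size ≤ n by omega)
        (show r.size ≤ n by omega)))

instance (n : ℕ) (P : MotzkinTree → Prop) : Finite {t : MotzkinTree // t.size = n ∧ P t} :=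
  ((finite_setOf_size_le n).subset fun _ ht => ht.1.le).to_subtype

abbrev Fiber (n q : ℕ) : Type := {t : MotzkinTree // t.size = n ∧ t.unaries = q}

def rootEquiv (n q : ℕ) : Fiber (n + 1) q ≃
    {_u : Unit // n = 0 ∧ q = 0} ⊕ {t : MotzkinTree // t.size = n ∧ t.unaries + 1 = q} ⊕
      Σ (u : antidiagonal q) (s : antidiagonal n), Fiber s.1.1 u.1.1 × Fiber s.1.2 u.1.2 where
  toFun
    | ⟨leaf, h⟩ => .inl ⟨(), by simp_all [size, unaries]⟩
    | ⟨unary t, h⟩ => .inr (.inl ⟨t, by simp_all [size, unaries]; omega⟩)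
    | ⟨binary l r, h⟩ => .inr (.inr ⟨⟨(l.unaries, r.unaries), by simp_all [unaries]⟩,
        ⟨(l.size, r.size), by simp_all [size]; omega⟩, ⟨l, rfl, rfl⟩, ⟨r, rfl, rfl⟩⟩)
  invFun
    | .inl ⟨_, h⟩ => ⟨leaf, by simp [size, unaries, h]⟩
    | .inr (.inl ⟨t, h⟩) => ⟨unary t, by simp [size, unaries]; omega⟩
    | .inr (.inr ⟨u, s, l, r⟩) => ⟨binary l.1 r.1, by
        have hu := mem_antidiagonal.1 u.2
        have hs := mem_antidiagonal.1 s.2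
        simp only [size, unaries, l.2.1, l.2.2, r.2.1, r.2.2]
        omega⟩
  left_inv := by rintro ⟨_ | _ | _, _⟩ <;> rfl
  right_inv := by
    rintro (_ | _ | ⟨⟨⟨a, b⟩, hu⟩, ⟨⟨i, j⟩, hs⟩, ⟨l, hl⟩, ⟨r, hr⟩⟩)
    · rfl
    · rfl
    · obtain ⟨rfl, rfl⟩ : l.size = i ∧ l.unaries = a := hl
      obtain ⟨rfl, rfl⟩ : r.size = j ∧ r.unaries = b := hr
      rfl

theorem card_fiber_succ (n q : ℕ) :
    Nat.card (Fiber (n + 1) q) =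
      Nat.card {_u : Unit // n = 0 ∧ q = 0} +
        Nat.card {t : MotzkinTree // t.size = n ∧ t.unaries + 1 = q} +
        ∑ u ∈ antidiagonal q, ∑ s ∈ antidiagonal n,
          Nat.card (Fiber s.1 u.1) * Nat.card (Fiber s.2 u.2) := by
  simp only [Nat.card_congr (rootEquiv n q), Nat.card_sum, Nat.card_sigma, Nat.card_prod,
    add_assoc]
  rw [← sum_coe_sort (antidiagonal q)]
  simp only [← sum_coe_sort (antidiagonal n)]

end MotzkinTree

open MotzkinTree

theorem coeff_motzkinGF (n q : ℕ) : coeff n (motzkinGF q) = Nat.card (Fiber n q) :=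
  coeff_mk _ _

theorem constantCoeff_motzkinGF (q : ℕ) : constantCoeff (motzkinGF q) = 0 := by
  have : IsEmpty (Fiber 0 q) := ⟨fun t => (size_pos t.1).ne' t.2.1⟩
  rw [← coeff_zero_eq_constantCoeff_apply, coeff_motzkinGF, Nat.card_of_isEmpty, Nat.cast_zero]

theorem coeff_succ_motzkinGF (n q : ℕ) :
    coeff (n + 1) (motzkinGF q) =
      (Nat.card {_u : Unit // n = 0 ∧ q = 0} +
        Nat.card {t : MotzkinTree // t.size = n ∧ t.unaries + 1 = q} : ℚ) +
        coeff n (∑ u ∈ antidiagonal q, motzkinGF u.1 * motzkinGF u.2) := by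
  simp [coeff_motzkinGF, card_fiber_succ, PowerSeries.coeff_mul, add_assoc]

theorem motzkinGF_zero_eq : motzkinGF 0 = PowerSeries.X * (1 + motzkinGF 0 * motzkinGF 0) := by
  ext (_ | n)
  · simp [constantCoeff_motzkinGF]
  · have : IsEmpty {t : MotzkinTree // t.size = n ∧ t.unaries + 1 = 0} := ⟨fun t => by omega⟩
    rcases n with _ | n <;> simp [coeff_succ_motzkinGF, PowerSeries.coeff_one]

theorem motzkinGF_succ_eq (q : ℕ) :
    motzkinGF (q + 1) =
      PowerSeries.X *
        (motzkinGF q + ∑ u ∈ antidiagonal (q + 1), motzkinGF u.1 * motzkinGF u.2) := by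
  ext (_ | n)
  · simp [constantCoeff_motzkinGF]
  · simp [coeff_succ_motzkinGF, coeff_motzkinGF]

/-- `(1-4z²)^{q-1/2}` is encoded as `(1-4z²)^q / S`, where `S` is the square root of `1 - 4z²`
with constant term `1`. -/
theorem motzkinGF_closed_form
    (P : ℕ → Polynomial ℚ)
    (hP2 : P 2 = 1)
    (hPrec : ∀ q : ℕ, 3 ≤ q →
      P q = P (q - 1) +
        Polynomial.X * ∑ ℓ ∈ Finset.Icc 2 (q - 2), P ℓ * P (q - ℓ))
    (S : PowerSeries ℚ)
    (hS : S ^ 2 = 1 - 4 * PowerSeries.X ^ 2)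
    (hS0 : PowerSeries.constantCoeff (R := ℚ) S = 1) :
    ∀ q : ℕ, 2 ≤ q →
      motzkinGF q * (1 - 4 * PowerSeries.X ^ 2) ^ q =
        PowerSeries.X ^ (q + 1) *
          Polynomial.aeval (PowerSeries.X ^ 2 : PowerSeries ℚ) (P q) * S := by
  intro q hq
  have hM0 := motzkinGF_zero_eq
  have hSM : S = 1 - 2 * PowerSeries.X * motzkinGF 0 := by
    refine PowerSeries.eq_of_sq_eq_sq_of_constantCoeff_eq ?_
      (by simp [hS0, constantCoeff_motzkinGF]) (by simp)
    rw [hS]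
    linear_combination (4 * PowerSeries.X) * hM0
  have hs : S + 2 * PowerSeries.X * motzkinGF 0 = 1 := by rw [hSM]; ring
  have hrec : ∀ q, motzkinGF (q + 1) * S = PowerSeries.X * (motzkinGF q +
      ∑ ℓ ∈ Icc 1 q, motzkinGF ℓ * motzkinGF (q + 1 - ℓ)) := by
    rw [hSM]
    exact mul_one_sub_eq motzkinGF_succ_eq
  have hA := motzkinRecurrence_mul_pow hs hrec
  have hB := motzkinRecurrence_pow_mul_aeval P hPrec (PowerSeries.X : PowerSeries ℚ)
  have hAB := hA.eq_of_two hB (by simp [mul_pow_two_eq hM0 hs hrec, hP2]) q hq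
  calc motzkinGF q * (1 - 4 * PowerSeries.X ^ 2) ^ q
      = motzkinGF q * S ^ (2 * q - 1) * S := by
        rw [← hS, ← pow_mul, mul_assoc, ← pow_succ, show 2 * q - 1 + 1 = 2 * q by omega]
    _ = _ := by rw [hAB]
end

section
/- Let k ≥ 1 and let R̂_{i,k} be the nested radicands defined by R̂_{1,k}(z) = (1-z)^2 - 4kz^2, R̂_{2,k}(z) = 1 - 4(k-1)z^2 - 2z + 2z^2 + 2z·sqrt(R̂_{1,k}(z)), and R̂_{i,k}(z) = 1 - 4(k-i+1)z^2 - 2z + 2z·sqrt(R̂_{i-1,k}(z)) for i ≥ 3. Let ρ̂_k = 1/(1+2√k), the smallest positive zero of R̂_{1,k}. Then R̂_{2,k}(ρ̂_k) = 5·ρ̂_k^2 > 0, and for every j with 2 ≤ j ≤ k, R̂_{j+1,k}(ρ̂_k) = (4j-1)·ρ̂_k^2 + 2·ρ̂_k·sqrt(R̂_{j,k}(ρ̂_k)) > 0. Consequently none of the radicands R̂_{j,k} for 2 ≤ j ≤ k+1 vanishes on (0, ρ̂_k]. -/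
open Real

noncomputable def Rhat (k : ℕ) : ℕ → ℝ → ℝ
  | 0, _ => 1
  | 1, z => (1 - z) ^ 2 - 4 * (k : ℝ) * z ^ 2
  | 2, z => 1 - 4 * ((k : ℝ) - 1) * z ^ 2 - 2 * z + 2 * z ^ 2
      + 2 * z * Real.sqrt (Rhat k 1 z)
  | i + 3, z => 1 - 4 * ((k : ℝ) - ((i : ℝ) + 3) + 1) * z ^ 2 - 2 * z
      + 2 * z * Real.sqrt (Rhat k (i + 2) z)

lemma Rhat_two_eq (k : ℕ) (z : ℝ) :
    Rhat k 2 z = Rhat k 1 z + 5 * z ^ 2 + 2 * z * Real.sqrt (Rhat k 1 z) := by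
  show 1 - 4 * ((k : ℝ) - 1) * z ^ 2 - 2 * z + 2 * z ^ 2
      + 2 * z * Real.sqrt (Rhat k 1 z)
    = ((1 - z) ^ 2 - 4 * (k : ℝ) * z ^ 2) + 5 * z ^ 2 + 2 * z * Real.sqrt (Rhat k 1 z)
  ring

lemma Rhat_succ_eq (k m : ℕ) (z : ℝ) :
    Rhat k (m + 3) z = Rhat k 1 z + (4 * ((m : ℝ) + 2) - 1) * z ^ 2
      + 2 * z * Real.sqrt (Rhat k (m + 2) z) := by
  show 1 - 4 * ((k : ℝ) - ((m : ℝ) + 3) + 1) * z ^ 2 - 2 * z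
      + 2 * z * Real.sqrt (Rhat k (m + 2) z)
    = ((1 - z) ^ 2 - 4 * (k : ℝ) * z ^ 2) + (4 * ((m : ℝ) + 2) - 1) * z ^ 2
      + 2 * z * Real.sqrt (Rhat k (m + 2) z)
  ring

lemma Rhat_one_nonneg (k : ℕ) (z : ℝ) (hz : 0 < z)
    (hzρ : z ≤ 1 / (1 + 2 * Real.sqrt k)) : 0 ≤ Rhat k 1 z := by
  have hs : 0 ≤ Real.sqrt k := Real.sqrt_nonneg _
  have hsq : Real.sqrt k ^ 2 = k := Real.sq_sqrt (Nat.cast_nonneg k)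
  have hd : (0:ℝ) < 1 + 2 * Real.sqrt k := by linarith
  have h1 : z * (1 + 2 * Real.sqrt k) ≤ 1 := by
    have := (le_div_iff₀ hd).mp hzρ
    linarith
  have ha : 0 ≤ 1 - z - 2 * Real.sqrt k * z := by nlinarith
  have hb : 0 ≤ 1 - z + 2 * Real.sqrt k * z := by nlinarith
  show 0 ≤ (1 - z) ^ 2 - 4 * (k : ℝ) * z ^ 2
  nlinarith [mul_nonneg ha hb]

lemma Rhat_one_rho (k : ℕ) : Rhat k 1 (1 / (1 + 2 * Real.sqrt k)) = 0 := by
  have hs : 0 ≤ Real.sqrt k := Real.sqrt_nonneg _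
  have hsq : Real.sqrt k ^ 2 = k := Real.sq_sqrt (Nat.cast_nonneg k)
  have hd : (0:ℝ) < 1 + 2 * Real.sqrt k := by linarith
  have hρ : (1 / (1 + 2 * Real.sqrt k)) * (1 + 2 * Real.sqrt k) = 1 :=
    one_div_mul_cancel hd.ne'
  show (1 - 1 / (1 + 2 * Real.sqrt k)) ^ 2
      - 4 * (k : ℝ) * (1 / (1 + 2 * Real.sqrt k)) ^ 2 = 0
  set ρ := 1 / (1 + 2 * Real.sqrt k) with hρdef
  linear_combination (-(1 - ρ + 2 * Real.sqrt k * ρ)) * hρ + 4 * ρ ^ 2 * hsq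

lemma Rhat_pos (k : ℕ) (j : ℕ) (hj : 2 ≤ j) (z : ℝ) (hz : 0 < z)
    (hzρ : z ≤ 1 / (1 + 2 * Real.sqrt k)) : 0 < Rhat k j z := by
  have h1 := Rhat_one_nonneg k z hz hzρ
  match j, hj with
  | 2, _ =>
    rw [Rhat_two_eq]
    nlinarith [Real.sqrt_nonneg (Rhat k 1 z), pow_pos hz 2,
      mul_nonneg hz.le (Real.sqrt_nonneg (Rhat k 1 z))]
  | (m+3), _ =>
    rw [Rhat_succ_eq]
    nlinarith [Real.sqrt_nonneg (Rhat k (m+2) z), pow_pos hz 2,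
      mul_nonneg hz.le (Real.sqrt_nonneg (Rhat k (m+2) z)),
      Nat.cast_nonneg (α := ℝ) m]

/-- At `ρ̂_k = 1/(1+2√k)` the outer radicands are strictly positive:
`R̂_{2,k}(ρ̂_k) = 5ρ̂_k²` and `R̂_{j+1,k}(ρ̂_k) = (4j-1)ρ̂_k² + 2ρ̂_k√(R̂_{j,k}(ρ̂_k)) > 0`;
consequently no radicand `R̂_{j,k}`, `2 ≤ j ≤ k+1`, vanishes on `(0, ρ̂_k]`. -/
theorem Rhat_positive_at_rhoHat (k : ℕ) (hk : 1 ≤ k) :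
    (Rhat k 2 (1 / (1 + 2 * Real.sqrt k)) =
        5 * (1 / (1 + 2 * Real.sqrt k)) ^ 2 ∧
      0 < Rhat k 2 (1 / (1 + 2 * Real.sqrt k))) ∧
    (∀ j : ℕ, 2 ≤ j → j ≤ k →
      Rhat k (j + 1) (1 / (1 + 2 * Real.sqrt k)) =
          (4 * (j : ℝ) - 1) * (1 / (1 + 2 * Real.sqrt k)) ^ 2 +
            2 * (1 / (1 + 2 * Real.sqrt k)) *
              Real.sqrt (Rhat k j (1 / (1 + 2 * Real.sqrt k))) ∧
        0 < Rhat k (j + 1) (1 / (1 + 2 * Real.sqrt k))) ∧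
    (∀ j : ℕ, 2 ≤ j → j ≤ k + 1 → ∀ z : ℝ, 0 < z →
      z ≤ 1 / (1 + 2 * Real.sqrt k) → Rhat k j z ≠ 0) := by
  have hd : (0:ℝ) < 1 + 2 * Real.sqrt k := by
    have := Real.sqrt_nonneg (k : ℝ); linarith
  have hρpos : 0 < 1 / (1 + 2 * Real.sqrt k) := by positivity
  have hρle : (1 / (1 + 2 * Real.sqrt k)) ≤ 1 / (1 + 2 * Real.sqrt k) := le_refl _
  refine ⟨⟨?_, Rhat_pos k 2 le_rfl _ hρpos hρle⟩, ?_, ?_⟩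
  · rw [Rhat_two_eq, Rhat_one_rho, Real.sqrt_zero]
    ring
  · intro j hj _
    obtain ⟨m, rfl⟩ : ∃ m, j = m + 2 := ⟨j - 2, by omega⟩
    refine ⟨?_, Rhat_pos k (m + 2 + 1) (by omega) _ hρpos hρle⟩
    rw [show m + 2 + 1 = m + 3 from rfl, Rhat_succ_eq, Rhat_one_rho]
    push_cast
    ring
  · intro j hj _ z hz hzρ
    exact (Rhat_pos k j hj z hz hzρ).ne'
end
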